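/- arXiv:1812.03058 — 3 statements merged into one kernel-verified Lean document; each statement's English description precedes it below -/
import Mathlib

section
/- If e ≃ f (the syntactic congruence), then for every letter a ∈ Σ, the Brzozowski-style sequential derivatives satisfy δ_Σ(e, a) ≃ δ_Σ(f, a). -/
open Classical

noncomputable section

/-- Series-parallel rational expressions. -/
inductive SPR (A : Type) : Type where
  | zero : SPR A
  | one : SPR A
  | var (a : A) : SPR A
  | add (e f : SPR A) : SPR A
  | seq (e f : SPR A) : SPR A
  | par (e f : SPR A) : SPR A
  | star (e : SPR A) : SPR A
  | dagger (e : SPR A) : SPR A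

/-- The set ℱ of expressions accepting the empty pomset. -/
inductive Null {A : Type} : SPR A → Prop where
  | one : Null SPR.one
  | addL {e : SPR A} (f : SPR A) : Null e → Null (SPR.add e f)
  | addR {e : SPR A} (f : SPR A) : Null e → Null (SPR.add f e)
  | seq {e f : SPR A} : Null e → Null f → Null (SPR.seq e f)
  | par {e f : SPR A} : Null e → Null f → Null (SPR.par e f)
  | star (e : SPR A) : Null (SPR.star e)
  | dagger (e : SPR A) : Null (SPR.dagger e)

/-- The syntactic congruence ≃: ACI of + and left-distributivity of + over ·. -/
inductive cong {A : Type} : SPR A → SPR A → Prop where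
  | add_zero (e : SPR A) : cong (SPR.add e SPR.zero) e
  | add_idem (e : SPR A) : cong (SPR.add e e) e
  | add_comm (e f : SPR A) : cong (SPR.add e f) (SPR.add f e)
  | add_assoc (e f g : SPR A) : cong (SPR.add e (SPR.add f g)) (SPR.add (SPR.add e f) g)
  | distrib (e f g : SPR A) :
      cong (SPR.seq (SPR.add e f) g) (SPR.add (SPR.seq e g) (SPR.seq f g))
  | refl (e : SPR A) : cong e e
  | symm {e f : SPR A} : cong e f → cong f e
  | trans {e f g : SPR A} : cong e f → cong f g → cong e g
  | add_congr {e e' f f' : SPR A} :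
      cong e e' → cong f f' → cong (SPR.add e f) (SPR.add e' f')
  | seq_congr {e e' f f' : SPR A} :
      cong e e' → cong f f' → cong (SPR.seq e f) (SPR.seq e' f')
  | par_congr {e e' f f' : SPR A} :
      cong e e' → cong f f' → cong (SPR.par e f) (SPR.par e' f')
  | star_congr {e e' : SPR A} : cong e e' → cong (SPR.star e) (SPR.star e')
  | dagger_congr {e e' : SPR A} : cong e e' → cong (SPR.dagger e) (SPR.dagger e')

/-- `e ⋆ f`: `f` if `e` is nullable, `0` otherwise. -/
def estar {A : Type} (e f : SPR A) : SPR A := if Null e then f else SPR.zero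

/-- `e ⨟ f`: `0` if `e ≃ 0`, `e · f` otherwise. -/
def eseq {A : Type} (e f : SPR A) : SPR A :=
  if cong e SPR.zero then SPR.zero else SPR.seq e f

/-- The Brzozowski-style sequential derivative δ_Σ. -/
def dseq {A : Type} : SPR A → A → SPR A
  | SPR.zero, _ => SPR.zero
  | SPR.one, _ => SPR.zero
  | SPR.var b, a => if a = b then SPR.one else SPR.zero
  | SPR.add e f, a => SPR.add (dseq e a) (dseq f a)
  | SPR.seq e f, a => SPR.add (eseq (dseq e a) f) (estar e (dseq f a))
  | SPR.par _ _, _ => SPR.zero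
  | SPR.star e, a => eseq (dseq e a) (SPR.star e)
  | SPR.dagger _, _ => SPR.zero

/-- The Brzozowski-style parallel derivative γ_Σ. -/
def dgam {A : Type} : SPR A → SPR A → SPR A → SPR A
  | SPR.zero, _, _ => SPR.zero
  | SPR.one, _, _ => SPR.zero
  | SPR.var _, _, _ => SPR.zero
  | SPR.add e f, g, h => SPR.add (dgam e g h) (dgam f g h)
  | SPR.seq e f, g, h => SPR.add (eseq (dgam e g h) f) (estar e (dgam f g h))
  | SPR.par e f, g, h => if cong g e ∧ cong h f then SPR.one else SPR.zero
  | SPR.star e, g, h => eseq (dgam e g h) (SPR.star e)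
  | SPR.dagger e, g, h =>
      if cong g e ∧ cong h (SPR.dagger e) then SPR.one else SPR.zero


namespace SPRAux
open SPR

variable {A : Type}

/-- Characterization of the ≃-class of 0: sums of zeros. -/
inductive Z0 {A : Type} : SPR A → Prop where
  | zero : Z0 SPR.zero
  | add {e f : SPR A} : Z0 e → Z0 f → Z0 (SPR.add e f)

lemma null_add {e f : SPR A} : Null (SPR.add e f) ↔ Null e ∨ Null f := by
  constructor
  · intro h; cases h with
    | addL _ h => exact Or.inl h
    | addR _ h => exact Or.inr h
  · rintro (h | h)
    · exact Null.addL _ h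
    · exact Null.addR _ h

lemma null_seq {e f : SPR A} : Null (SPR.seq e f) ↔ Null e ∧ Null f := by
  constructor
  · intro h; cases h with | seq h1 h2 => exact ⟨h1, h2⟩
  · rintro ⟨h1, h2⟩; exact Null.seq h1 h2

lemma null_par {e f : SPR A} : Null (SPR.par e f) ↔ Null e ∧ Null f := by
  constructor
  · intro h; cases h with | par h1 h2 => exact ⟨h1, h2⟩
  · rintro ⟨h1, h2⟩; exact Null.par h1 h2

lemma null_zero : ¬ Null (SPR.zero : SPR A) := by intro h; cases h

lemma null_cong {e f : SPR A} (h : cong e f) : Null e ↔ Null f := by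
  induction h with
  | add_zero e => simp [null_add, (null_zero (A := A))]
  | add_idem e => simp [null_add]
  | add_comm e f => simp [null_add]; tauto
  | add_assoc e f g => simp [null_add]; tauto
  | distrib e f g => simp [null_add, null_seq]; tauto
  | refl e => rfl
  | symm _ ih => exact ih.symm
  | trans _ _ ih1 ih2 => exact ih1.trans ih2
  | add_congr _ _ ih1 ih2 => simp [null_add, ih1, ih2]
  | seq_congr _ _ ih1 ih2 => simp [null_seq, ih1, ih2]
  | par_congr _ _ ih1 ih2 => simp [null_par, ih1, ih2]
  | star_congr _ _ => constructor <;> intro <;> exact Null.star _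
  | dagger_congr _ _ => constructor <;> intro <;> exact Null.dagger _

lemma z0_add {e f : SPR A} : Z0 (SPR.add e f) ↔ Z0 e ∧ Z0 f := by
  constructor
  · intro h; cases h with | add h1 h2 => exact ⟨h1, h2⟩
  · rintro ⟨h1, h2⟩; exact Z0.add h1 h2

lemma z0_seq {e f : SPR A} : ¬ Z0 (SPR.seq e f) := by intro h; cases h

lemma z0_cong {e f : SPR A} (h : cong e f) : Z0 e ↔ Z0 f := by
  induction h with
  | add_zero e =>
    simp [z0_add]; intro; exact Z0.zero
  | add_idem e => simp [z0_add]
  | add_comm e f => simp [z0_add]; tauto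
  | add_assoc e f g => simp [z0_add]; tauto
  | distrib e f g => simp [z0_add, z0_seq]
  | refl e => rfl
  | symm _ ih => exact ih.symm
  | trans _ _ ih1 ih2 => exact ih1.trans ih2
  | add_congr _ _ ih1 ih2 => simp [z0_add, ih1, ih2]
  | seq_congr _ _ _ _ => simp [z0_seq]
  | par_congr _ _ _ _ =>
    constructor <;> (intro h; cases h)
  | star_congr _ _ => constructor <;> (intro h; cases h)
  | dagger_congr _ _ => constructor <;> (intro h; cases h)

lemma z0_of_cong_zero {e : SPR A} (h : cong e SPR.zero) : Z0 e :=
  (z0_cong h).mpr Z0.zero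

lemma cong_zero_of_z0 {e : SPR A} (h : Z0 e) : cong e SPR.zero := by
  induction h with
  | zero => exact cong.refl _
  | add h1 h2 ih1 ih2 =>
    exact cong.trans (cong.add_congr ih1 ih2) (cong.add_idem _)

lemma cong_zero_iff {e : SPR A} : cong e SPR.zero ↔ Z0 e :=
  ⟨z0_of_cong_zero, cong_zero_of_z0⟩

lemma eseq_cong {e e' f f' : SPR A} (he : cong e e') (hf : cong f f') :
    cong (eseq e f) (eseq e' f') := by
  unfold eseq
  by_cases h : cong e SPR.zero
  · have h' : cong e' SPR.zero := cong.trans (cong.symm he) h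
    simp [h, h']; exact cong.refl _
  · have h' : ¬ cong e' SPR.zero := fun h' => h (cong.trans he h')
    simp [h, h']; exact cong.seq_congr he hf

lemma estar_cong {e e' f f' : SPR A} (he : cong e e') (hf : cong f f') :
    cong (estar e f) (estar e' f') := by
  unfold estar
  by_cases h : Null e
  · have h' : Null e' := (null_cong he).mp h
    simp [h, h']; exact hf
  · have h' : ¬ Null e' := fun h' => h ((null_cong he).mpr h')
    simp [h, h']; exact cong.refl _

/-- eseq distributes over add on the left. -/
lemma eseq_add {x y g : SPR A} :
    cong (eseq (SPR.add x y) g) (SPR.add (eseq x g) (eseq y g)) := by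
  unfold eseq
  by_cases hx : cong x SPR.zero <;> by_cases hy : cong y SPR.zero
  · have : cong (SPR.add x y) SPR.zero :=
      cong_zero_of_z0 (Z0.add (z0_of_cong_zero hx) (z0_of_cong_zero hy))
    simp [hx, hy, this]
    exact cong.symm (cong.add_idem _)
  · have hxy : ¬ cong (SPR.add x y) SPR.zero := fun h => by
      rcases z0_add.mp (z0_of_cong_zero h) with ⟨_, h2⟩
      exact hy (cong_zero_of_z0 h2)
    simp [hx, hy, hxy]
    -- seq (x+y) g ≃ 0 + seq y g
    have h1 : cong (SPR.add x y) y :=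
      cong.trans (cong.add_congr hx (cong.refl y))
        (cong.trans (cong.add_comm _ _) (cong.add_zero _))
    have h2 : cong (SPR.seq (SPR.add x y) g) (SPR.seq y g) :=
      cong.seq_congr h1 (cong.refl g)
    exact cong.trans h2 (cong.symm (cong.trans (cong.add_comm _ _) (cong.add_zero _)))
  · have hxy : ¬ cong (SPR.add x y) SPR.zero := fun h => by
      rcases z0_add.mp (z0_of_cong_zero h) with ⟨h1, _⟩
      exact hx (cong_zero_of_z0 h1)
    simp [hx, hy, hxy]
    have h1 : cong (SPR.add x y) x :=
      cong.trans (cong.add_congr (cong.refl x) hy) (cong.add_zero _)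
    have h2 : cong (SPR.seq (SPR.add x y) g) (SPR.seq x g) :=
      cong.seq_congr h1 (cong.refl g)
    exact cong.trans h2 (cong.symm (cong.add_zero _))
  · have hxy : ¬ cong (SPR.add x y) SPR.zero := fun h => by
      rcases z0_add.mp (z0_of_cong_zero h) with ⟨h1, _⟩
      exact hx (cong_zero_of_z0 h1)
    simp [hx, hy, hxy]
    exact cong.distrib _ _ _

lemma estar_add {e f g : SPR A} :
    cong (estar (SPR.add e f) g) (SPR.add (estar e g) (estar f g)) := by
  unfold estar
  by_cases he : Null e <;> by_cases hf : Null f <;>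
    simp [he, hf, null_add]
  · exact cong.symm (cong.add_idem _)
  · exact cong.symm (cong.add_zero _)
  · exact cong.symm (cong.trans (cong.add_comm _ _) (cong.add_zero _))
  · exact cong.symm (cong.add_idem _)

/-- (p+q)+(r+s) ≃ (p+r)+(q+s). -/
lemma add_swap (p q r s : SPR A) :
    cong (SPR.add (SPR.add p q) (SPR.add r s))
      (SPR.add (SPR.add p r) (SPR.add q s)) := by
  have c := @cong.refl A
  apply cong.trans (cong.symm (cong.add_assoc p q (SPR.add r s)))
  apply cong.trans (cong.add_congr (c p) (cong.add_assoc q r s))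
  apply cong.trans
    (cong.add_congr (c p) (cong.add_congr (cong.add_comm q r) (c s)))
  apply cong.trans
    (cong.add_congr (c p) (cong.symm (cong.add_assoc r q s)))
  exact cong.add_assoc p r (SPR.add q s)

end SPRAux

/-- The sequential derivative respects the syntactic congruence. -/
theorem dseq_cong {A : Type} {e f : SPR A} (h : cong e f) (a : A) :
    cong (dseq e a) (dseq f a) := by
  induction h with
  | add_zero e => simp [dseq]; exact cong.add_zero _
  | add_idem e => exact cong.add_idem _
  | add_comm e f => exact cong.add_comm _ _
  | add_assoc e f g => exact cong.add_assoc _ _ _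
  | distrib e f g =>
    simp only [dseq]
    refine cong.trans (cong.add_congr SPRAux.eseq_add SPRAux.estar_add) ?_
    exact SPRAux.add_swap _ _ _ _
  | refl e => exact cong.refl _
  | symm _ ih => exact cong.symm ih
  | trans _ _ ih1 ih2 => exact cong.trans ih1 ih2
  | add_congr _ _ ih1 ih2 => exact cong.add_congr ih1 ih2
  | seq_congr h1 h2 ih1 ih2 =>
    exact cong.add_congr (SPRAux.eseq_cong ih1 h2) (SPRAux.estar_cong h1 ih2)
  | par_congr _ _ _ _ => exact cong.refl _
  | star_congr h1 ih =>
    exact SPRAux.eseq_cong ih (cong.star_congr h1)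
  | dagger_congr _ _ => exact cong.refl _
end
end

section
/- If e ⪯_Σ f in the trace dependency preorder of the syntactic pomset automaton, then d_∥(e) ≤ d_∥(f) and d_†(e) ≤ d_†(f), where d_∥ counts the maximal nesting of ∥ and d_† counts the maximal nesting of † in an expression. -/
open Classical

noncomputable section

/-- The trace dependency preorder ⪯_Σ of the syntactic pomset automaton
(on raw expressions, compatible with the congruence ≃). -/
inductive dleq {A : Type} : SPR A → SPR A → Prop where
  | refl (e : SPR A) : dleq e e
  | trans {e f g : SPR A} : dleq e f → dleq f g → dleq e g
  | congr {e f : SPR A} : cong e f → dleq e f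
  | delta (e : SPR A) (a : A) : dleq (dseq e a) e
  | gamma (e g h : SPR A) : dleq (dgam e g h) e
  | forkL {e g h : SPR A} : ¬ cong (dgam e g h) SPR.zero → dleq g e
  | forkR {e g h : SPR A} : ¬ cong (dgam e g h) SPR.zero → dleq h e

/-- Maximal nesting of parallel composition in an expression. -/
def dpar {A : Type} : SPR A → ℕ
  | SPR.zero => 0
  | SPR.one => 0
  | SPR.var _ => 0
  | SPR.add e f => max (dpar e) (dpar f)
  | SPR.seq e f => max (dpar e) (dpar f)
  | SPR.par e f => max (dpar e) (dpar f) + 1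
  | SPR.star e => dpar e
  | SPR.dagger e => dpar e

/-- Maximal nesting of the parallel star in an expression. -/
def ddag {A : Type} : SPR A → ℕ
  | SPR.zero => 0
  | SPR.one => 0
  | SPR.var _ => 0
  | SPR.add e f => max (ddag e) (ddag f)
  | SPR.seq e f => max (ddag e) (ddag f)
  | SPR.par e f => max (ddag e) (ddag f)
  | SPR.star e => ddag e
  | SPR.dagger e => ddag e + 1

lemma cong_dpar {A : Type} {e f : SPR A} (h : cong e f) : dpar e = dpar f := by
  induction h <;> simp_all [dpar] <;> omega

lemma cong_ddag {A : Type} {e f : SPR A} (h : cong e f) : ddag e = ddag f := by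
  induction h <;> simp_all [ddag] <;> omega

lemma dpar_eseq {A : Type} (e f : SPR A) : dpar (eseq e f) ≤ max (dpar e) (dpar f) := by
  unfold eseq; split <;> simp [dpar]

lemma ddag_eseq {A : Type} (e f : SPR A) : ddag (eseq e f) ≤ max (ddag e) (ddag f) := by
  unfold eseq; split <;> simp [ddag]

lemma dpar_estar {A : Type} (e f : SPR A) : dpar (estar e f) ≤ dpar f := by
  unfold estar; split <;> simp [dpar]

lemma ddag_estar {A : Type} (e f : SPR A) : ddag (estar e f) ≤ ddag f := by
  unfold estar; split <;> simp [ddag]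

lemma dseq_le {A : Type} (e : SPR A) (a : A) :
    dpar (dseq e a) ≤ dpar e ∧ ddag (dseq e a) ≤ ddag e := by
  induction e with
  | zero => simp [dseq, dpar, ddag]
  | one => simp [dseq, dpar, ddag]
  | var b => by_cases h : a = b <;> simp [dseq, h, dpar, ddag]
  | add e f ihe ihf => simp [dseq, dpar, ddag]; omega
  | seq e f ihe ihf =>
      simp only [dseq, dpar, ddag]
      constructor
      · exact max_le ((dpar_eseq _ _).trans (by simp [dpar]; omega))
          ((dpar_estar _ _).trans (by omega))
      · exact max_le ((ddag_eseq _ _).trans (by simp [ddag]; omega))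
          ((ddag_estar _ _).trans (by omega))
  | par e f ihe ihf => simp [dseq, dpar, ddag]
  | star e ih =>
      simp only [dseq, dpar, ddag]
      exact ⟨(dpar_eseq _ _).trans (by simp [dpar]; omega),
        (ddag_eseq _ _).trans (by simp [ddag]; omega)⟩
  | dagger e ih => simp [dseq, dpar, ddag]

lemma dgam_le {A : Type} (e g h : SPR A) :
    dpar (dgam e g h) ≤ dpar e ∧ ddag (dgam e g h) ≤ ddag e := by
  induction e with
  | zero => simp [dgam, dpar, ddag]
  | one => simp [dgam, dpar, ddag]
  | var b => simp [dgam, dpar, ddag]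
  | add e f ihe ihf => simp [dgam, dpar, ddag]; omega
  | seq e f ihe ihf =>
      simp only [dgam, dpar, ddag]
      constructor
      · exact max_le ((dpar_eseq _ _).trans (by simp [dpar]; omega))
          ((dpar_estar _ _).trans (by omega))
      · exact max_le ((ddag_eseq _ _).trans (by simp [ddag]; omega))
          ((ddag_estar _ _).trans (by omega))
  | par e f ihe ihf => simp only [dgam]; split <;> simp [dpar, ddag]
  | star e ih =>
      simp only [dgam, dpar, ddag]
      exact ⟨(dpar_eseq _ _).trans (by simp [dpar]; omega),
        (ddag_eseq _ _).trans (by simp [ddag]; omega)⟩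
  | dagger e ih => simp only [dgam]; split <;> simp [dpar, ddag]

lemma eseq_cong_zero {A : Type} {e : SPR A} (f : SPR A) (h : cong e SPR.zero) :
    cong (eseq e f) SPR.zero := by
  unfold eseq; rw [if_pos h]; exact cong.refl _

lemma estar_cong_zero {A : Type} (e : SPR A) {f : SPR A} (h : cong f SPR.zero) :
    cong (estar e f) SPR.zero := by
  unfold estar; split
  · exact h
  · exact cong.refl _

lemma add_cong_zero {A : Type} {e f : SPR A} (he : cong e SPR.zero)
    (hf : cong f SPR.zero) : cong (SPR.add e f) SPR.zero :=
  cong.trans (cong.add_congr he hf) (cong.add_zero _)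

lemma fork_le {A : Type} (e g h : SPR A) (hnz : ¬ cong (dgam e g h) SPR.zero) :
    (dpar g ≤ dpar e ∧ ddag g ≤ ddag e) ∧ (dpar h ≤ dpar e ∧ ddag h ≤ ddag e) := by
  induction e with
  | zero => exact absurd (cong.refl _) hnz
  | one => exact absurd (cong.refl _) hnz
  | var b => exact absurd (cong.refl _) hnz
  | add e f ihe ihf =>
      simp only [dgam] at hnz
      by_cases h1 : cong (dgam e g h) SPR.zero
      · by_cases h2 : cong (dgam f g h) SPR.zero
        · exact absurd (add_cong_zero h1 h2) hnz
        · have := ihf h2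
          simp only [dpar, ddag]; omega
      · have := ihe h1
        simp only [dpar, ddag]; omega
  | seq e f ihe ihf =>
      simp only [dgam] at hnz
      by_cases h1 : cong (dgam e g h) SPR.zero
      · by_cases h2 : cong (dgam f g h) SPR.zero
        · exact absurd (add_cong_zero (eseq_cong_zero _ h1) (estar_cong_zero _ h2)) hnz
        · have := ihf h2
          simp only [dpar, ddag]; omega
      · have := ihe h1
        simp only [dpar, ddag]; omega
  | par e f ihe ihf =>
      simp only [dgam] at hnz
      split at hnz
      · rename_i hc
        have h1 := cong_dpar hc.1
        have h2 := cong_dpar hc.2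
        have h3 := cong_ddag hc.1
        have h4 := cong_ddag hc.2
        simp only [dpar, ddag]; omega
      · exact absurd (cong.refl _) hnz
  | star e ih =>
      simp only [dgam] at hnz
      by_cases h1 : cong (dgam e g h) SPR.zero
      · exact absurd (eseq_cong_zero _ h1) hnz
      · have := ih h1
        simp only [dpar, ddag]; omega
  | dagger e ih =>
      simp only [dgam] at hnz
      split at hnz
      · rename_i hc
        have h1 := cong_dpar hc.1
        have h2 := cong_dpar hc.2
        have h3 := cong_ddag hc.1
        have h4 := cong_ddag hc.2
        simp only [dpar, ddag] at *; omega
      · exact absurd (cong.refl _) hnz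

/-- The trace dependency preorder does not increase the ∥-nesting and †-nesting
measures. -/
theorem dleq_measures {A : Type} {e f : SPR A} (h : dleq e f) :
    dpar e ≤ dpar f ∧ ddag e ≤ ddag f := by
  induction h with
  | refl e => exact ⟨le_refl _, le_refl _⟩
  | trans h1 h2 ih1 ih2 => exact ⟨ih1.1.trans ih2.1, ih1.2.trans ih2.2⟩
  | congr hc => exact ⟨(cong_dpar hc).le, (cong_ddag hc).le⟩
  | delta e a => exact dseq_le e a
  | gamma e g h => exact dgam_le e g h
  | forkL hnz => exact (fork_le _ _ _ hnz).1
  | forkR hnz => exact (fork_le _ _ _ hnz).2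
end
end

section
/- For spr-expressions e, g, h with γ_Σ(e, g, h) ≄ 0 in the syntactic pomset automaton: g ≺_Σ e, and moreover either h ≺_Σ e or e ≃ f† for some expression f. -/
open Classical

noncomputable section

/-!
Measure an expression by `depth e = (dpar e, ddag e)`, ordered componentwise. It is invariant
under `≃` and does not grow under δ_Σ and γ_Σ, and a non-zero γ_Σ(e,g,h) comes from a subterm
`g ∥ h` or `g†` (with `h ≃ g†`) of `e`. Hence `depth` is monotone along `⪯_Σ`, `depth g < depth e`,
and `depth h < depth e` unless `h ≃ f†` with `depth f† ≤ depth e`. In that last case `e ⪯_Σ h`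
forces `e ≃ f†`: a `⪯_Σ`-chain up to `f†` from an expression of at least its depth can only
use `≃`-steps and right-hand forks of daggers, each of which stays in the `≃`-class of `f†`.
-/

namespace cong

variable {A : Type} {x y z : SPR A}

theorem congr_right (h : cong y z) : cong x y ↔ cong x z :=
  ⟨fun hxy => hxy.trans h, fun hxz => hxz.trans h.symm⟩

theorem zero_add (x : SPR A) : cong (SPR.add SPR.zero x) x :=
  (cong.add_comm _ _).trans (cong.add_zero x)

theorem add_add_add_comm (a b c d : SPR A) :
    cong (SPR.add (SPR.add a b) (SPR.add c d)) (SPR.add (SPR.add a c) (SPR.add b d)) :=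
  (cong.add_assoc a b _).symm.trans <|
    (cong.add_congr (cong.refl a) <| (cong.add_assoc b c d).trans <|
      (cong.add_congr (cong.add_comm b c) (cong.refl d)).trans (cong.add_assoc c b d).symm).trans
    (cong.add_assoc a c _)

end cong

namespace SPR

variable {A : Type}

@[simp] theorem null_zero : ¬ Null (zero : SPR A) := nofun

@[simp] theorem null_add_iff {e f : SPR A} : Null (add e f) ↔ Null e ∨ Null f :=
  ⟨fun | .addL _ h => .inl h | .addR _ h => .inr h,
   fun | .inl h => Null.addL _ h | .inr h => Null.addR _ h⟩

@[simp] theorem null_seq_iff {e f : SPR A} : Null (seq e f) ↔ Null e ∧ Null f :=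
  ⟨fun | .seq h₁ h₂ => ⟨h₁, h₂⟩, fun ⟨h₁, h₂⟩ => Null.seq h₁ h₂⟩

@[simp] theorem null_par_iff {e f : SPR A} : Null (par e f) ↔ Null e ∧ Null f :=
  ⟨fun | .par h₁ h₂ => ⟨h₁, h₂⟩, fun ⟨h₁, h₂⟩ => Null.par h₁ h₂⟩

@[simp] theorem null_star (e : SPR A) : Null (star e) := Null.star e

@[simp] theorem null_dagger (e : SPR A) : Null (dagger e) := Null.dagger e

def IsSumOfZeros : SPR A → Prop
  | zero => True
  | add e f => IsSumOfZeros e ∧ IsSumOfZeros f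
  | _ => False

theorem cong_zero_of_isSumOfZeros {x : SPR A} (hx : IsSumOfZeros x) : cong x zero := by
  induction x with
  | zero => exact cong.refl _
  | add e f ihe ihf => exact (cong.add_congr (ihe hx.1) (ihf hx.2)).trans (cong.add_idem _)
  | _ => exact hx.elim

theorem isSumOfZeros_iff_of_cong {x y : SPR A} (h : cong x y) :
    IsSumOfZeros x ↔ IsSumOfZeros y := by
  induction h with
  | refl => rfl
  | symm _ ih => exact ih.symm
  | trans _ _ ih₁ ih₂ => exact ih₁.trans ih₂
  | add_congr _ _ ih₁ ih₂ => simp only [IsSumOfZeros, ih₁, ih₂]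
  | add_zero | add_idem | add_comm | add_assoc | distrib => simp only [IsSumOfZeros]; tauto
  | _ => simp only [IsSumOfZeros]

theorem cong_zero_iff {x : SPR A} : cong x zero ↔ IsSumOfZeros x :=
  ⟨fun h => (isSumOfZeros_iff_of_cong h).2 trivial, cong_zero_of_isSumOfZeros⟩

theorem add_cong_zero_iff {x y : SPR A} :
    cong (add x y) zero ↔ cong x zero ∧ cong y zero := by
  simp only [cong_zero_iff, IsSumOfZeros]

theorem eseq_cong_zero {x : SPR A} (hx : cong x zero) (f : SPR A) : cong (eseq x f) zero := by
  simp only [eseq, if_pos hx]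
  exact cong.refl _

theorem estar_cong_zero (e : SPR A) {x : SPR A} (hx : cong x zero) : cong (estar e x) zero := by
  unfold estar
  split_ifs
  exacts [hx, cong.refl _]

theorem eseq_add (x y f : SPR A) : cong (eseq (add x y) f) (add (eseq x f) (eseq y f)) := by
  by_cases hx : cong x zero <;> by_cases hy : cong y zero <;>
    simp only [eseq, add_cong_zero_iff, hx, hy, and_self, and_false, false_and, if_true,
      if_false]
  · exact (cong.add_idem _).symm
  · exact (cong.seq_congr ((cong.add_congr hx (cong.refl y)).trans (cong.zero_add y))
      (cong.refl f)).trans (cong.zero_add _).symm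
  · exact (cong.seq_congr ((cong.add_congr (cong.refl x) hy).trans (cong.add_zero x))
      (cong.refl f)).trans (cong.add_zero _).symm
  · exact cong.distrib x y f

theorem estar_add (e f x : SPR A) : cong (estar (add e f) x) (add (estar e x) (estar f x)) := by
  by_cases he : Null e <;> by_cases hf : Null f <;> simp only [estar, null_add_iff, he, hf,
    or_self, or_true, true_or, if_true, if_false]
  · exact (cong.add_idem x).symm
  · exact (cong.add_zero x).symm
  · exact (cong.zero_add x).symm
  · exact (cong.add_idem _).symm

theorem dgam_par_ne_zero {e f g h : SPR A} (hne : ¬ cong (dgam (par e f) g h) zero) :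
    cong g e ∧ cong h f := by
  by_contra hc
  simp only [dgam, if_neg hc] at hne
  exact hne (cong.refl _)

theorem dgam_dagger_ne_zero {e g h : SPR A} (hne : ¬ cong (dgam (dagger e) g h) zero) :
    cong g e ∧ cong h (dagger e) := by
  by_contra hc
  simp only [dgam, if_neg hc] at hne
  exact hne (cong.refl _)

end SPR

namespace cong

open SPR

variable {A : Type} {x y : SPR A}

theorem null_iff (h : cong x y) : Null x ↔ Null y := by
  induction h with
  | refl => rfl
  | symm _ ih => exact ih.symm
  | trans _ _ ih₁ ih₂ => exact ih₁.trans ih₂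
  | add_congr _ _ ih₁ ih₂ | seq_congr _ _ ih₁ ih₂ | par_congr _ _ ih₁ ih₂ =>
    simp only [null_add_iff, null_seq_iff, null_par_iff, ih₁, ih₂]
  | _ => simp only [null_add_iff, null_seq_iff, null_zero, null_star, null_dagger, or_false] <;>
    tauto

theorem eseq {x' f f' : SPR A} (hx : cong x x') (hf : cong f f') :
    cong (eseq x f) (eseq x' f') := by
  by_cases h : cong x zero
  · simp only [_root_.eseq, if_pos h, if_pos (hx.symm.trans h)]
    exact cong.refl _
  · simp only [_root_.eseq, if_neg h, if_neg fun h' => h (hx.trans h')]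
    exact cong.seq_congr hx hf

theorem estar {x' : SPR A} (he : cong x y) (hx : cong x' y') :
    cong (estar x x') (estar y y') := by
  by_cases h : Null x
  · simp only [_root_.estar, if_pos h, if_pos (he.null_iff.1 h)]
    exact hx
  · simp only [_root_.estar, if_neg h, if_neg (mt he.null_iff.2 h)]
    exact cong.refl _

theorem dseq (h : cong x y) (a : A) : cong (dseq x a) (dseq y a) := by
  induction h with
  | refl => exact cong.refl _
  | symm _ ih => exact ih.symm
  | trans _ _ ih₁ ih₂ => exact ih₁.trans ih₂
  | add_zero => exact cong.add_zero _
  | add_idem => exact cong.add_idem _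
  | add_comm => exact cong.add_comm _ _
  | add_assoc => exact cong.add_assoc _ _ _
  | distrib =>
    exact (cong.add_congr (eseq_add _ _ _) (estar_add _ _ _)).trans (add_add_add_comm _ _ _ _)
  | add_congr _ _ ih₁ ih₂ => exact cong.add_congr ih₁ ih₂
  | seq_congr h₁ h₂ ih₁ ih₂ => exact cong.add_congr (ih₁.eseq h₂) (h₁.estar ih₂)
  | star_congr h ih => exact ih.eseq (cong.star_congr h)
  | par_congr | dagger_congr => exact cong.refl _

theorem dgam (h : cong x y) (g k : SPR A) : cong (dgam x g k) (dgam y g k) := by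
  induction h with
  | refl => exact cong.refl _
  | symm _ ih => exact ih.symm
  | trans _ _ ih₁ ih₂ => exact ih₁.trans ih₂
  | add_zero => exact cong.add_zero _
  | add_idem => exact cong.add_idem _
  | add_comm => exact cong.add_comm _ _
  | add_assoc => exact cong.add_assoc _ _ _
  | distrib =>
    exact (cong.add_congr (eseq_add _ _ _) (estar_add _ _ _)).trans (add_add_add_comm _ _ _ _)
  | add_congr _ _ ih₁ ih₂ => exact cong.add_congr ih₁ ih₂
  | seq_congr h₁ h₂ ih₁ ih₂ => exact cong.add_congr (ih₁.eseq h₂) (h₁.estar ih₂)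
  | star_congr h ih => exact ih.eseq (cong.star_congr h)
  | par_congr h₁ h₂ =>
    simp only [_root_.dgam, congr_right h₁, congr_right h₂]
    exact cong.refl _
  | dagger_congr h =>
    simp only [_root_.dgam, congr_right h, congr_right (cong.dagger_congr h)]
    exact cong.refl _

end cong

namespace SPR

variable {A : Type}

def depth (e : SPR A) : ℕ × ℕ := (dpar e, ddag e)

@[simp] theorem depth_add (e f : SPR A) : depth (add e f) = depth e ⊔ depth f := rfl

@[simp] theorem depth_seq (e f : SPR A) : depth (seq e f) = depth e ⊔ depth f := rfl

theorem depth_lt_par_left (e f : SPR A) : depth e < depth (par e f) := by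
  simp only [depth, dpar, ddag, Prod.mk_lt_mk]
  omega

theorem depth_lt_par_right (e f : SPR A) : depth f < depth (par e f) := by
  simp only [depth, dpar, ddag, Prod.mk_lt_mk]
  omega

theorem depth_lt_dagger (e : SPR A) : depth e < depth (dagger e) := by
  simp only [depth, dpar, ddag, Prod.mk_lt_mk]
  omega

theorem _root_.cong.depth_eq {x y : SPR A} (h : cong x y) : depth x = depth y := by
  induction h with
  | refl => rfl
  | symm _ ih => exact ih.symm
  | trans _ _ ih₁ ih₂ => exact ih₁.trans ih₂
  | _ => simp_all only [depth, dpar, ddag, Prod.mk.injEq] <;> omega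

theorem depth_eseq_le (x f : SPR A) : depth (eseq x f) ≤ depth x ⊔ depth f := by
  unfold eseq
  split_ifs <;> simp [depth, dpar, ddag]

theorem depth_estar_le (e x : SPR A) : depth (estar e x) ≤ depth x := by
  unfold estar
  split_ifs <;> simp [depth, dpar, ddag]

theorem depth_dseq_le (e : SPR A) (a : A) : depth (dseq e a) ≤ depth e := by
  induction e with
  | var b =>
    unfold dseq
    split_ifs <;> rfl
  | add e f ihe ihf => exact sup_le_sup ihe ihf
  | seq e f ihe ihf =>
    exact sup_le ((depth_eseq_le _ _).trans (sup_le_sup_right ihe _))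
      ((depth_estar_le _ _).trans (ihf.trans le_sup_right))
  | star e ih => exact (depth_eseq_le _ _).trans (sup_le ih le_rfl)
  | _ => exact zero_le

theorem depth_dgam_le (e g h : SPR A) : depth (dgam e g h) ≤ depth e := by
  induction e with
  | add e f ihe ihf => exact sup_le_sup ihe ihf
  | seq e f ihe ihf =>
    exact sup_le ((depth_eseq_le _ _).trans (sup_le_sup_right ihe _))
      ((depth_estar_le _ _).trans (ihf.trans le_sup_right))
  | star e ih => exact (depth_eseq_le _ _).trans (sup_le ih le_rfl)
  | par | dagger =>
    unfold dgam
    split_ifs <;> exact zero_le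
  | _ => exact zero_le

theorem depth_dgam_dagger (f g h : SPR A) : depth (dgam (dagger f) g h) = 0 := by
  unfold dgam
  split_ifs <;> rfl

def ForkBelow (g h : SPR A) (d : ℕ × ℕ) : Prop :=
  depth g < d ∧ (depth h < d ∨ ∃ f, cong h (dagger f) ∧ depth (dagger f) ≤ d)

theorem ForkBelow.mono {g h : SPR A} {d d' : ℕ × ℕ} (hd : d ≤ d') (H : ForkBelow g h d) :
    ForkBelow g h d' :=
  ⟨H.1.trans_le hd, H.2.imp (·.trans_le hd) fun ⟨f, hf, hle⟩ => ⟨f, hf, hle.trans hd⟩⟩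

theorem forkBelow_of_dgam_ne_zero {e g h : SPR A} (hne : ¬ cong (dgam e g h) zero) :
    ForkBelow g h (depth e) := by
  induction e with
  | add e f ihe ihf =>
    rcases not_and_or.1 (mt add_cong_zero_iff.2 hne) with hne | hne
    · exact (ihe hne).mono (by simp)
    · exact (ihf hne).mono (by simp)
  | seq e f ihe ihf =>
    rcases not_and_or.1 (mt add_cong_zero_iff.2 hne) with hne | hne
    · exact (ihe (mt (eseq_cong_zero · f) hne)).mono (by simp)
    · exact (ihf (mt (estar_cong_zero e) hne)).mono (by simp)
  | star e ih => exact ih (mt (eseq_cong_zero · _) hne)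
  | par e f =>
    obtain ⟨hg, hh⟩ := dgam_par_ne_zero hne
    rw [ForkBelow, hg.depth_eq, hh.depth_eq]
    exact ⟨depth_lt_par_left e f, .inl (depth_lt_par_right e f)⟩
  | dagger e =>
    obtain ⟨hg, hh⟩ := dgam_dagger_ne_zero hne
    exact ⟨hg.depth_eq ▸ depth_lt_dagger e, .inr ⟨e, hh, le_rfl⟩⟩
  | _ => exact absurd (cong.refl _) hne

theorem depth_le_of_dleq {x y : SPR A} (h : dleq x y) : depth x ≤ depth y := by
  induction h with
  | refl => exact le_rfl
  | trans _ _ ih₁ ih₂ => exact ih₁.trans ih₂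
  | congr h => exact h.depth_eq.le
  | delta e a => exact depth_dseq_le e a
  | gamma e g h => exact depth_dgam_le e g h
  | forkL hne => exact (forkBelow_of_dgam_ne_zero hne).1.le
  | forkR hne =>
    rcases (forkBelow_of_dgam_ne_zero hne).2 with hlt | ⟨f, hf, hle⟩
    · exact hlt.le
    · exact hf.depth_eq ▸ hle

theorem cong_dagger_of_dleq {x y f : SPR A} (h : dleq x y) (hy : cong y (dagger f))
    (hx : depth (dagger f) ≤ depth x) : cong x (dagger f) := by
  have depth_dagger_pos : ¬ depth (dagger f) ≤ 0 :=
    (zero_le.trans_lt (depth_lt_dagger f)).not_ge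
  induction h with
  | refl => exact hy
  | trans hxz _ ih₁ ih₂ => exact ih₁ (ih₂ hy (hx.trans (depth_le_of_dleq hxz))) hx
  | congr h => exact h.trans hy
  | delta e a => exact absurd (hx.trans_eq (hy.dseq a).depth_eq) depth_dagger_pos
  | gamma e g k =>
    exact absurd (hx.trans_eq ((hy.dgam g k).depth_eq.trans (depth_dgam_dagger f g k)))
      depth_dagger_pos
  | forkL hne =>
    have hg := (dgam_dagger_ne_zero fun h => hne ((hy.dgam _ _).trans h)).1
    exact absurd (hg.depth_eq ▸ hx) (depth_lt_dagger f).not_ge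
  | forkR hne => exact (dgam_dagger_ne_zero fun h => hne ((hy.dgam _ _).trans h)).2

end SPR

/-- If the parallel derivative γ_Σ(e,g,h) is non-zero, then `g` is strictly below
`e`, and either `h` is strictly below `e` or `e` is congruent to a parallel star. -/
theorem dgam_strict {A : Type} {e g h : SPR A}
    (hne : ¬ cong (dgam e g h) SPR.zero) :
    (dleq g e ∧ ¬ dleq e g) ∧
      ((dleq h e ∧ ¬ dleq e h) ∨ ∃ f : SPR A, cong e (SPR.dagger f)) := by
  obtain ⟨hg, hh⟩ := SPR.forkBelow_of_dgam_ne_zero hne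
  refine ⟨⟨dleq.forkL hne, fun heg => (SPR.depth_le_of_dleq heg).not_gt hg⟩, ?_⟩
  by_cases heh : dleq e h
  · rcases hh with hlt | ⟨f, hf, hle⟩
    · exact absurd hlt (SPR.depth_le_of_dleq heh).not_gt
    · exact .inr ⟨f, SPR.cong_dagger_of_dleq heh hf hle⟩
  · exact .inl ⟨dleq.forkR hne, heh⟩
end
end
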